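/- Soundness of the rule of McIver, Morgan, Kaminski and Katoen: Let M be a finitely-branching MDP with absorbing terminal state ⊥ and initial state σ. Suppose there exist antitone functions p : (0,∞) → (0,1] and d : (0,∞) → (0,∞) (i.e., r₁ ≤ r₂ implies p(r₁) ≥ p(r₂) and d(r₁) ≥ d(r₂)) and a function V : S → ℝ such that V(⊥) = 0, V(s) > 0 for every s ∈ Reach(σ) with s ≠ ⊥, V is a supermartingale function on Reach(σ), and for every s ∈ Reach(σ) with s ≠ ⊥ and every action μ ∈ Act(s), μ({s' : V(s) − V(s') ≥ d(V(s))}) ≥ p(V(s)). Then M is almost surely terminating from σ. -/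

import Mathlib

/-!
Fix a level `H > 0`. By antitonicity of `p` and `d`, at every reachable state with `V < H` other
than `term` each action lowers `V` by at least `d H` with probability at least `p H`. Hence from
every reachable state the set `{term} ∪ {V ≥ H}` is hit within `N = ⌈H / d H⌉` steps with
probability at least `(p H)^N`, and therefore, repeating in blocks of `N` steps, almost surely.
By the maximal inequality for the nonnegative supermartingale `V`, the level `{V ≥ H}` is ever
hit with probability at most `V σ / H`. So every scheduler terminates with probability at least
`1 - V σ / H`, for every `H`.
-/

open scoped ENNReal Classical

/-- A finitely-branching MDP on a state space `S`: each state has a nonempty finite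
set of available actions, each a finitely-supported PMF on `S`. -/
structure MDP (S : Type) where
  act : S → Finset (PMF S)
  act_nonempty : ∀ s, (act s).Nonempty
  act_finSupp : ∀ s, ∀ μ ∈ act s, (μ : PMF S).support.Finite

/-- A scheduler maps every history `(s₀, …, sₙ)` (given as the list of earlier
states `s₀, …, sₙ₋₁` together with the current state `sₙ`) to an available action. -/
structure Scheduler {S : Type} (M : MDP S) where
  choose : List S → S → PMF S
  choose_mem : ∀ hist s, choose hist s ∈ M.act s

namespace MDP

variable {S : Type}

/-- Reachability: `s'` is reachable from `σ` via a finite path each of whose steps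
lies in the support of some available action. -/
inductive Reach (M : MDP S) (σ : S) : S → Prop
  | refl : Reach M σ σ
  | step {s s' : S} (μ : PMF S) : Reach M σ s → μ ∈ M.act s → s' ∈ μ.support → Reach M σ s'

/-- Probability that the run (currently at `s`, with past history `hist`) visits the
set `T` within the next `k` steps, under scheduler `𝔰`. -/
noncomputable def hitProbAux (M : MDP S) (𝔰 : Scheduler M) (T : Set S) :
    ℕ → List S → S → ℝ≥0∞
  | 0, _, s => if s ∈ T then 1 else 0
  | k + 1, hist, s =>
      if s ∈ T then 1
      else ∑' s', (𝔰.choose hist s) s' * hitProbAux M 𝔰 T k (hist ++ [s]) s'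

/-- Probability that the run started at `σ` visits `T` within the first `k` steps. -/
noncomputable def hitProbWithin (M : MDP S) (𝔰 : Scheduler M) (σ : S) (T : Set S)
    (k : ℕ) : ℝ≥0∞ :=
  hitProbAux M 𝔰 T k [] σ

/-- Probability that the run started at `σ` ever visits `T`, under scheduler `𝔰`. -/
noncomputable def hitProb (M : MDP S) (𝔰 : Scheduler M) (σ : S) (T : Set S) : ℝ≥0∞ :=
  ⨆ k, hitProbWithin M 𝔰 σ T k

/-- The terminal state `term` is absorbing: the only action there is the Dirac PMF. -/
def Absorbing (M : MDP S) (term : S) : Prop :=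
  M.act term = {PMF.pure term}

/-- Termination probability: infimum over schedulers of the probability of visiting
the terminal state. -/
noncomputable def PrTerm (M : MDP S) (term σ : S) : ℝ≥0∞ :=
  ⨅ 𝔰 : Scheduler M, hitProb M 𝔰 σ {term}

/-- Almost-sure termination from `σ`. -/
def AST (M : MDP S) (term σ : S) : Prop := PrTerm M term σ = 1

/-- Mass a PMF assigns to a set. -/
noncomputable def mass (μ : PMF S) (A : Set S) : ℝ≥0∞ := ∑' a : A, μ a

/-- Expected value of a real-valued function under a (finitely supported) PMF. -/
noncomputable def expect (μ : PMF S) (V : S → ℝ) : ℝ := ∑' s, (μ s).toReal * V s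

/-- `V` is a supermartingale function on the states reachable from `σ`. -/
def SupermartingaleOn (M : MDP S) (σ : S) (V : S → ℝ) : Prop :=
  ∀ s, M.Reach σ s → ∀ μ ∈ M.act s, expect μ V ≤ V s

/-- `(Ψ, p)` is a stochastic invariant for initial state `σ`: under every scheduler the
probability that the run ever leaves `Ψ` is at most `p`. -/
def StochasticInvariant (M : MDP S) (σ : S) (Ψ : Set S) (p : ℝ) : Prop :=
  ⨆ 𝔰 : Scheduler M, hitProb M 𝔰 σ Ψᶜ ≤ ENNReal.ofReal p

end MDP

lemma PMF.tsum_mul_le_one {α : Type*} (μ : PMF α) {f : α → ℝ≥0∞} (hf : ∀ s, f s ≤ 1) :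
    ∑' s, μ s * f s ≤ 1 :=
  calc ∑' s, μ s * f s ≤ ∑' s, μ s := ENNReal.tsum_le_tsum fun s => mul_le_of_le_one_right' (hf s)
    _ = 1 := μ.tsum_coe

namespace MDP

variable {S : Type} {M : MDP S}

instance : Nonempty (Scheduler M) :=
  ⟨⟨fun _ s => (M.act_nonempty s).choose, fun _ s => (M.act_nonempty s).choose_spec⟩⟩

lemma Reach.of_apply_ne_zero {σ s s' : S} {μ : PMF S} (hs : M.Reach σ s) (hμ : μ ∈ M.act s)
    (hs' : μ s' ≠ 0) : M.Reach σ s' :=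
  .step μ hs hμ ((μ.mem_support_iff s').2 hs')

lemma mass_mono (μ : PMF S) {A B : Set S} (h : A ⊆ B) : mass μ A ≤ mass μ B :=
  ENNReal.tsum_mono_subtype μ h

lemma ofReal_expect {μ : PMF S} {V : S → ℝ} (hfin : μ.support.Finite)
    (hV : ∀ s ∈ μ.support, 0 ≤ V s) :
    ENNReal.ofReal (expect μ V) = ∑' s, μ s * ENNReal.ofReal (V s) := by
  have hnn : ∀ s, 0 ≤ (μ s).toReal * V s := fun s => by
    by_cases hs : μ s = 0
    · simp [hs]
    · exact mul_nonneg ENNReal.toReal_nonneg (hV s ((μ.mem_support_iff s).2 hs))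
  have hsum : Summable fun s => (μ s).toReal * V s :=
    summable_of_hasFiniteSupport <| hfin.subset fun s hs =>
      (μ.mem_support_iff s).2 fun h0 => hs (by simp [h0])
  rw [expect, ENNReal.ofReal_tsum_of_nonneg hnn hsum]
  refine tsum_congr fun s => ?_
  rw [ENNReal.ofReal_mul ENNReal.toReal_nonneg, ENNReal.ofReal_toReal (μ.apply_ne_top s)]

section Hitting

variable (𝔰 : Scheduler M) {T : Set S}

lemma hitProbAux_of_mem {s : S} (hs : s ∈ T) (k : ℕ) (hist : List S) :
    hitProbAux M 𝔰 T k hist s = 1 := by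
  cases k <;> exact if_pos hs

lemma hitProbAux_succ_of_notMem {s : S} (hs : s ∉ T) (k : ℕ) (hist : List S) :
    hitProbAux M 𝔰 T (k + 1) hist s =
      ∑' s', 𝔰.choose hist s s' * hitProbAux M 𝔰 T k (hist ++ [s]) s' :=
  if_neg hs

lemma hitProbAux_le_one (k : ℕ) : ∀ hist s, hitProbAux M 𝔰 T k hist s ≤ 1 := by
  induction k with
  | zero => intro hist s; rw [hitProbAux]; split_ifs <;> simp
  | succ k ih =>
    intro hist s
    by_cases hs : s ∈ T
    · rw [hitProbAux_of_mem 𝔰 hs]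
    · rw [hitProbAux_succ_of_notMem 𝔰 hs]
      exact PMF.tsum_mul_le_one _ (ih _)

lemma hitProb_le_one (σ : S) : hitProb M 𝔰 σ T ≤ 1 :=
  iSup_le fun k => hitProbAux_le_one 𝔰 k [] σ

lemma hitProbAux_union_le (T' : Set S) (k : ℕ) :
    ∀ hist s, hitProbAux M 𝔰 (T ∪ T') k hist s ≤
      hitProbAux M 𝔰 T k hist s + hitProbAux M 𝔰 T' k hist s := by
  intro hist s
  by_cases hT : s ∈ T
  · rw [hitProbAux_of_mem 𝔰 hT]
    exact (hitProbAux_le_one 𝔰 k hist s).trans le_self_add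
  by_cases hT' : s ∈ T'
  · rw [hitProbAux_of_mem 𝔰 hT']
    exact (hitProbAux_le_one 𝔰 k hist s).trans le_add_self
  have hs : s ∉ T ∪ T' := fun h => h.elim hT hT'
  cases k with
  | zero => simp [hitProbAux, hs]
  | succ k =>
    rw [hitProbAux_succ_of_notMem 𝔰 hs, hitProbAux_succ_of_notMem 𝔰 hT,
      hitProbAux_succ_of_notMem 𝔰 hT', ← ENNReal.tsum_add]
    exact ENNReal.tsum_le_tsum fun s' =>
      (mul_le_mul_right (hitProbAux_union_le T' k _ s') _).trans_eq (mul_add _ _ _)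

lemma hitProb_union_le (σ : S) (T' : Set S) :
    hitProb M 𝔰 σ (T ∪ T') ≤ hitProb M 𝔰 σ T + hitProb M 𝔰 σ T' :=
  iSup_le fun k => (hitProbAux_union_le 𝔰 T' k [] σ).trans
    (add_le_add (le_iSup (hitProbWithin M 𝔰 σ T) k) (le_iSup (hitProbWithin M 𝔰 σ T') k))

lemma one_sub_hitProbAux_succ {s : S} (hs : s ∉ T) (k : ℕ) (hist : List S) :
    1 - hitProbAux M 𝔰 T (k + 1) hist s =
      ∑' s', 𝔰.choose hist s s' * (1 - hitProbAux M 𝔰 T k (hist ++ [s]) s') := by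
  set μ := 𝔰.choose hist s
  set h := hitProbAux M 𝔰 T k (hist ++ [s])
  have hsum : (∑' s', μ s' * (1 - h s')) + ∑' s', μ s' * h s' = 1 := by
    rw [← ENNReal.tsum_add]
    refine (tsum_congr fun s' => ?_).trans μ.tsum_coe
    rw [← mul_add, tsub_add_cancel_of_le (hitProbAux_le_one 𝔰 k _ s'), mul_one]
  rw [hitProbAux_succ_of_notMem 𝔰 hs]
  exact (ENNReal.eq_sub_of_add_eq
    (ne_top_of_le_ne_top ENNReal.one_ne_top (PMF.tsum_mul_le_one μ (hitProbAux_le_one 𝔰 k _)))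
    hsum).symm

variable {σ : S}

/-- Markov property at time `a`: after `a` steps the run sits at a reachable state, from which
it misses `T` during the next `b` steps with probability at most `c`. -/
lemma one_sub_hitProbAux_add_le {b : ℕ} {c : ℝ≥0∞}
    (hc : ∀ hist s, M.Reach σ s → 1 - hitProbAux M 𝔰 T b hist s ≤ c) (a : ℕ) :
    ∀ hist s, M.Reach σ s →
      1 - hitProbAux M 𝔰 T (a + b) hist s ≤ (1 - hitProbAux M 𝔰 T a hist s) * c := by
  intro hist s hs
  by_cases hsT : s ∈ T
  · simp [hitProbAux_of_mem 𝔰 hsT]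
  cases a with
  | zero => simpa [hitProbAux, hsT] using hc hist s hs
  | succ a =>
    rw [Nat.add_right_comm, one_sub_hitProbAux_succ 𝔰 hsT, one_sub_hitProbAux_succ 𝔰 hsT,
      ← ENNReal.tsum_mul_right]
    refine ENNReal.tsum_le_tsum fun s' => ?_
    by_cases h0 : 𝔰.choose hist s s' = 0
    · simp [h0]
    · rw [mul_assoc]
      exact mul_le_mul_right
        (one_sub_hitProbAux_add_le hc a _ s' (hs.of_apply_ne_zero (𝔰.choose_mem hist s) h0)) _

lemma one_sub_hitProbAux_mul_le_pow {N : ℕ} {ε : ℝ≥0∞}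
    (hN : ∀ hist s, M.Reach σ s → ε ≤ hitProbAux M 𝔰 T N hist s) (k : ℕ) :
    ∀ hist s, M.Reach σ s → 1 - hitProbAux M 𝔰 T (k * N) hist s ≤ (1 - ε) ^ k := by
  induction k with
  | zero => intro hist s _; simp
  | succ k ih =>
    intro hist s hs
    rw [Nat.succ_mul, add_comm, pow_succ']
    exact (one_sub_hitProbAux_add_le 𝔰 ih N hist s hs).trans
      (mul_le_mul_left (tsub_le_tsub_left (hN hist s hs) 1) _)

lemma hitProb_eq_one_of_le_hitProbAux {N : ℕ} {ε : ℝ≥0∞} (hε : ε ≠ 0)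
    (hN : ∀ hist s, M.Reach σ s → ε ≤ hitProbAux M 𝔰 T N hist s) :
    hitProb M 𝔰 σ T = 1 := by
  refine le_antisymm (hitProb_le_one 𝔰 σ) (tsub_eq_zero_iff_le.1 (nonpos_iff_eq_zero.1 ?_))
  have hlt : 1 - ε < 1 := ENNReal.sub_lt_self ENNReal.one_ne_top one_ne_zero hε
  refine ge_of_tendsto' (ENNReal.tendsto_pow_atTop_nhds_zero_of_lt_one hlt) fun k => ?_
  exact (tsub_le_tsub_left (le_iSup (hitProbWithin M 𝔰 σ T) (k * N)) 1).trans
    (one_sub_hitProbAux_mul_le_pow 𝔰 hN k [] σ .refl)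

/-- `n` consecutive drops by `δ` from `V s ≤ n δ` would make `V` nonpositive, which is only
possible inside `T`. -/
lemma pow_le_hitProbAux_of_drop {V : S → ℝ} {δ : ℝ} {ε : ℝ≥0∞} (hε : ε ≤ 1)
    (hpos : ∀ s, M.Reach σ s → s ∉ T → 0 < V s)
    (hdrop : ∀ s, M.Reach σ s → s ∉ T → ∀ μ ∈ M.act s,
      ε ≤ mass μ {s' | V s' ≤ V s - δ}) (n : ℕ) :
    ∀ hist s, M.Reach σ s → V s ≤ n * δ → ε ^ n ≤ hitProbAux M 𝔰 T n hist s := by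
  intro hist s hs hVs
  by_cases hsT : s ∈ T
  · rw [hitProbAux_of_mem 𝔰 hsT]
    exact pow_le_one' hε n
  cases n with
  | zero => exact absurd hVs (by simpa using hpos s hs hsT)
  | succ n =>
    set μ := 𝔰.choose hist s
    have hμ : μ ∈ M.act s := 𝔰.choose_mem hist s
    rw [hitProbAux_succ_of_notMem 𝔰 hsT, pow_succ']
    calc ε * ε ^ n
        ≤ mass μ {s' | V s' ≤ V s - δ} * ε ^ n := mul_le_mul_left (hdrop s hs hsT μ hμ) _
      _ = ∑' s' : {s' | V s' ≤ V s - δ}, μ s' * ε ^ n := ENNReal.tsum_mul_right.symm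
      _ ≤ ∑' s' : {s' | V s' ≤ V s - δ}, μ s' * hitProbAux M 𝔰 T n (hist ++ [s]) s' := by
          refine ENNReal.tsum_le_tsum fun ⟨s', hs'⟩ => ?_
          by_cases h0 : μ s' = 0
          · simp [h0]
          refine mul_le_mul_right (pow_le_hitProbAux_of_drop hε hpos hdrop n _ s'
            (hs.of_apply_ne_zero hμ h0) ?_) _
          push_cast at hVs
          linarith [hs'.out]
      _ ≤ ∑' s', μ s' * hitProbAux M 𝔰 T n (hist ++ [s]) s' :=
          ENNReal.tsum_comp_le_tsum_of_injective Subtype.val_injective _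

end Hitting

section Supermartingale

variable {σ : S} {V : S → ℝ}

lemma SupermartingaleOn.tsum_mul_ofReal_le (hV : M.SupermartingaleOn σ V)
    (hVnn : ∀ s, M.Reach σ s → 0 ≤ V s) {s : S} (hs : M.Reach σ s) {μ : PMF S}
    (hμ : μ ∈ M.act s) : ∑' s', μ s' * ENNReal.ofReal (V s') ≤ ENNReal.ofReal (V s) := by
  rw [← ofReal_expect (M.act_finSupp s μ hμ) fun s' hs' => hVnn s' (.step μ hs hμ hs')]
  exact ENNReal.ofReal_le_ofReal (hV s hs μ hμ)

lemma SupermartingaleOn.hitProbAux_mul_le (hV : M.SupermartingaleOn σ V)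
    (hVnn : ∀ s, M.Reach σ s → 0 ≤ V s) (𝔰 : Scheduler M) (H : ℝ) (k : ℕ) :
    ∀ hist s, M.Reach σ s →
      hitProbAux M 𝔰 {s' | H ≤ V s'} k hist s * ENNReal.ofReal H ≤ ENNReal.ofReal (V s) := by
  intro hist s hs
  by_cases hH : H ≤ V s
  · rw [hitProbAux_of_mem 𝔰 hH, one_mul]
    exact ENNReal.ofReal_le_ofReal hH
  cases k with
  | zero => simp [hitProbAux, hH]
  | succ k =>
    rw [hitProbAux_succ_of_notMem 𝔰 hH, ← ENNReal.tsum_mul_right]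
    refine le_trans (ENNReal.tsum_le_tsum fun s' => ?_)
      (hV.tsum_mul_ofReal_le hVnn hs (𝔰.choose_mem hist s))
    by_cases h0 : 𝔰.choose hist s s' = 0
    · simp [h0]
    · rw [mul_assoc]
      exact mul_le_mul_right (hV.hitProbAux_mul_le hVnn 𝔰 H k _ s'
        (hs.of_apply_ne_zero (𝔰.choose_mem hist s) h0)) _

lemma SupermartingaleOn.hitProb_le (hV : M.SupermartingaleOn σ V)
    (hVnn : ∀ s, M.Reach σ s → 0 ≤ V s) (𝔰 : Scheduler M) {H : ℝ} (hH : 0 < H) :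
    hitProb M 𝔰 σ {s | H ≤ V s} ≤ ENNReal.ofReal (V σ / H) := by
  rw [ENNReal.ofReal_div_of_pos hH]
  exact iSup_le fun k => (ENNReal.le_div_iff_mul_le (.inl (ENNReal.ofReal_pos.2 hH).ne')
    (.inl ENNReal.ofReal_ne_top)).2 (hV.hitProbAux_mul_le hVnn 𝔰 H k [] σ .refl)

end Supermartingale

lemma hitProb_term_union_ge_eq_one {term σ : S} {p d : ℝ → ℝ}
    (hp_pos : ∀ r : ℝ, 0 < r → 0 < p r ∧ p r ≤ 1)
    (hd_pos : ∀ r : ℝ, 0 < r → 0 < d r)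
    (hp_anti : ∀ r₁ r₂ : ℝ, 0 < r₁ → r₁ ≤ r₂ → p r₂ ≤ p r₁)
    (hd_anti : ∀ r₁ r₂ : ℝ, 0 < r₁ → r₁ ≤ r₂ → d r₂ ≤ d r₁)
    {V : S → ℝ} (hVpos : ∀ s, M.Reach σ s → s ≠ term → 0 < V s)
    (hprog : ∀ s, M.Reach σ s → s ≠ term → ∀ μ ∈ M.act s,
      ENNReal.ofReal (p (V s)) ≤ mass μ {s' | d (V s) ≤ V s - V s'})
    (𝔰 : Scheduler M) {H : ℝ} (hH : 0 < H) :
    hitProb M 𝔰 σ ({term} ∪ {s | H ≤ V s}) = 1 := by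
  set T : Set S := {term} ∪ {s | H ≤ V s}
  have hbelow : ∀ s, s ∉ T → s ≠ term ∧ V s < H := fun s hs =>
    ⟨fun h => hs (.inl h), not_le.1 fun h => hs (.inr h)⟩
  have hpos : ∀ s, M.Reach σ s → s ∉ T → 0 < V s := fun s hs hsT =>
    hVpos s hs (hbelow s hsT).1
  have hdrop : ∀ s, M.Reach σ s → s ∉ T → ∀ μ ∈ M.act s,
      ENNReal.ofReal (p H) ≤ mass μ {s' | V s' ≤ V s - d H} := by
    intro s hs hsT μ hμ
    obtain ⟨hne, hlt⟩ := hbelow s hsT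
    have hVs := hVpos s hs hne
    refine (ENNReal.ofReal_le_ofReal (hp_anti _ _ hVs hlt.le)).trans
      ((hprog s hs hne μ hμ).trans (mass_mono μ fun s' (hs' : d (V s) ≤ V s - V s') =>
        show V s' ≤ V s - d H by linarith [hd_anti _ _ hVs hlt.le]))
  have hε : ENNReal.ofReal (p H) ≤ 1 := ENNReal.ofReal_le_one.2 (hp_pos H hH).2
  have hH_le : H ≤ ⌈H / d H⌉₊ * d H :=
    (div_le_iff₀ (hd_pos H hH)).1 (Nat.le_ceil _)
  refine hitProb_eq_one_of_le_hitProbAux 𝔰 (N := ⌈H / d H⌉₊)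
    (pow_ne_zero ⌈H / d H⌉₊ (ENNReal.ofReal_pos.2 (hp_pos H hH).1).ne') fun hist s hs => ?_
  by_cases hsT : s ∈ T
  · rw [hitProbAux_of_mem 𝔰 hsT]
    exact pow_le_one' hε _
  exact pow_le_hitProbAux_of_drop 𝔰 hε hpos hdrop _ hist s hs
    ((hbelow s hsT).2.le.trans hH_le)

end MDP

open Filter Topology in
theorem mmkk_rule_sound_general {S : Type} (M : MDP S) (term σ : S)
    (p d : ℝ → ℝ)
    (hp_pos : ∀ r : ℝ, 0 < r → 0 < p r ∧ p r ≤ 1)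
    (hd_pos : ∀ r : ℝ, 0 < r → 0 < d r)
    (hp_anti : ∀ r₁ r₂ : ℝ, 0 < r₁ → r₁ ≤ r₂ → p r₂ ≤ p r₁)
    (hd_anti : ∀ r₁ r₂ : ℝ, 0 < r₁ → r₁ ≤ r₂ → d r₂ ≤ d r₁)
    (V : S → ℝ)
    (hV0 : V term = 0)
    (hVpos : ∀ s, M.Reach σ s → s ≠ term → 0 < V s)
    (hVsm : M.SupermartingaleOn σ V)
    (hprog : ∀ s, M.Reach σ s → s ≠ term → ∀ μ ∈ M.act s,
      ENNReal.ofReal (p (V s)) ≤ MDP.mass μ {s' | d (V s) ≤ V s - V s'}) :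
    M.AST term σ := by
  have hVnn : ∀ s, M.Reach σ s → 0 ≤ V s := fun s hs =>
    (eq_or_ne s term).elim (fun h => h ▸ hV0.ge) fun h => (hVpos s hs h).le
  have hbound : ∀ 𝔰 (n : ℕ), 0 < n →
      1 ≤ M.hitProb 𝔰 σ {term} + ENNReal.ofReal (V σ / n) := fun 𝔰 n hn =>
    calc 1 = M.hitProb 𝔰 σ ({term} ∪ {s | n ≤ V s}) :=
          (MDP.hitProb_term_union_ge_eq_one hp_pos hd_pos hp_anti hd_anti hVpos hprog 𝔰
            (Nat.cast_pos.2 hn)).symm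
      _ ≤ M.hitProb 𝔰 σ {term} + M.hitProb 𝔰 σ {s | n ≤ V s} := MDP.hitProb_union_le 𝔰 σ _
      _ ≤ M.hitProb 𝔰 σ {term} + ENNReal.ofReal (V σ / n) :=
          add_le_add_right (hVsm.hitProb_le hVnn 𝔰 (Nat.cast_pos.2 hn)) _
  have hterm_one : ∀ 𝔰, 1 ≤ M.hitProb 𝔰 σ {term} := fun 𝔰 => by
    have hlim : Tendsto (fun n : ℕ => M.hitProb 𝔰 σ {term} + ENNReal.ofReal (V σ / n)) atTop
        (𝓝 (M.hitProb 𝔰 σ {term} + ENNReal.ofReal 0)) :=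
      tendsto_const_nhds.add (ENNReal.tendsto_ofReal (tendsto_const_div_atTop_nhds_zero_nat _))
    simpa using ge_of_tendsto hlim ((eventually_gt_atTop 0).mono (hbound 𝔰))
  exact le_antisymm (iInf_le_of_le (Classical.arbitrary _) (MDP.hitProb_le_one _ σ))
    (le_iInf hterm_one)

/-- **Soundness of the rule of McIver, Morgan, Kaminski and Katoen.** Suppose there are
antitone progress functions `p : (0,∞) → (0,1]` and `d : (0,∞) → (0,∞)` and a
supermartingale `V` (zero at the terminal state, positive at all other reachable states)
such that at every reachable non-terminal state `s` and action `μ`, the value of `V` drops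
by at least `d (V s)` with probability at least `p (V s)`.  Then `M` is almost surely
terminating from `σ`. -/
theorem mmkk_rule_sound {S : Type} [Countable S] (M : MDP S) (term σ : S)
    (hterm : M.Absorbing term)
    (p d : ℝ → ℝ)
    (hp_pos : ∀ r : ℝ, 0 < r → 0 < p r ∧ p r ≤ 1)
    (hd_pos : ∀ r : ℝ, 0 < r → 0 < d r)
    (hp_anti : ∀ r₁ r₂ : ℝ, 0 < r₁ → r₁ ≤ r₂ → p r₂ ≤ p r₁)
    (hd_anti : ∀ r₁ r₂ : ℝ, 0 < r₁ → r₁ ≤ r₂ → d r₂ ≤ d r₁)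
    (V : S → ℝ)
    (hV0 : V term = 0)
    (hVpos : ∀ s, M.Reach σ s → s ≠ term → 0 < V s)
    (hVsm : M.SupermartingaleOn σ V)
    (hprog : ∀ s, M.Reach σ s → s ≠ term → ∀ μ ∈ M.act s,
      ENNReal.ofReal (p (V s)) ≤ MDP.mass μ {s' | d (V s) ≤ V s - V s'}) :
    M.AST term σ :=
  mmkk_rule_sound_general M term σ p d hp_pos hd_pos hp_anti hd_anti V hV0 hVpos hVsm hprog
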